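/- arXiv:1409.6082 — 2 statements merged into one kernel-verified Lean document; each statement's English description precedes it below -/
import Mathlib

section
/- Let a < b be real numbers, let α ∈ (0,1], let ψ : [a,b] → ℂ be α-Hölder continuous, and let λ ∈ (a,b). Then lim_{ε→0⁺} ∫_a^b ψ(t)/(t − λ − iε) dt = p.v.∫_a^b ψ(t)/(t−λ) dt + iπ ψ(λ). -/
/-!
Subtracting `ψ λ` splits both integrals into a regular part and `ψ λ` times the integral of a
kernel. The Hölder bound `‖ψ t - ψ λ‖ ≤ M |t - λ| ^ α` dominates `(ψ t - ψ λ) / (t - λ - i ε)`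
by `M |t - λ| ^ (α - 1)`, integrable because `α > 0`, uniformly in `ε` and in the excised
neighbourhood of `λ`; so by dominated convergence both regular parts tend to
`∫ (ψ t - ψ λ) / (t - λ)`. The kernel integrals are explicit: `log (b - λ) - log (λ - a)` for the
principal value, and `log (b - λ - i ε) - log (a - λ - i ε)`, whose second term approaches the
branch cut of `log` from below and so tends to `log (λ - a) - i π`.
-/

open MeasureTheory Filter Set Topology Complex

lemma continuousOn_of_dist_le_mul_rpow {X Y : Type*} [PseudoMetricSpace X] [PseudoMetricSpace Y]
    {f : X → Y} {s : Set X} {M α : ℝ} (hα : 0 < α)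
    (hf : ∀ x ∈ s, ∀ y ∈ s, dist (f x) (f y) ≤ M * dist x y ^ α) : ContinuousOn f s := by
  intro x hx
  have hbound : Tendsto (fun y => M * dist y x ^ α) (𝓝[s] x) (𝓝 0) := by
    have : Tendsto (fun y => M * dist y x ^ α) (𝓝 x) (𝓝 (M * dist x x ^ α)) :=
      ((continuous_id.dist continuous_const).rpow_const fun _ => Or.inr hα.le).const_mul M
        |>.tendsto x
    simpa [Real.zero_rpow hα.ne'] using this.mono_left nhdsWithin_le_nhds
  refine tendsto_iff_dist_tendsto_zero.2
    (squeeze_zero' (Eventually.of_forall fun _ => dist_nonneg) ?_ hbound)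
  filter_upwards [self_mem_nhdsWithin] with y hy using hf y hy x hx

lemma integrableOn_Icc_abs_sub_rpow {s : ℝ} (hs : -1 < s) (a b c : ℝ) :
    IntegrableOn (fun t => |t - c| ^ s) (Icc a b) := by
  have h := (intervalIntegral.intervalIntegrable_cpow' (r := (s : ℂ)) (by simpa using hs)
    (a := a - c) (b := b - c)).norm.comp_sub_right c
  simp only [norm_cpow_real, norm_real, Real.norm_eq_abs, sub_add_cancel] at h
  exact ((intervalIntegrable_iff' enorm_ne_top).1 h).mono_set Icc_subset_uIcc

lemma norm_div_le_mul_rpow_sub_one {𝕜 : Type*} [NormedDivisionRing 𝕜] {x w : 𝕜} {r M α : ℝ}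
    (hα : 0 < α) (hM : 0 ≤ M) (hr : 0 ≤ r) (hrw : r ≤ ‖w‖) (hx : ‖x‖ ≤ M * r ^ α) :
    ‖x / w‖ ≤ M * r ^ (α - 1) := by
  rcases hr.eq_or_lt with rfl | hr
  · have : x = 0 := norm_le_zero_iff.1 (by simpa [Real.zero_rpow hα.ne'] using hx)
    simpa [this] using mul_nonneg hM (Real.rpow_nonneg le_rfl _)
  calc ‖x / w‖ = ‖x‖ / ‖w‖ := norm_div x w
    _ ≤ M * r ^ α / r := div_le_div₀ (by positivity) hx hr hrw
    _ = M * r ^ (α - 1) := by rw [Real.rpow_sub_one hr.ne', mul_div_assoc]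

lemma tendsto_setIntegral_diff_ball {X E : Type*} [MetricSpace X] [MeasurableSpace X]
    [OpensMeasurableSpace X] [NormedAddCommGroup E] [NormedSpace ℝ E] {μ : Measure X}
    [NullSingletonClass μ] {f : X → E} {s : Set X} (hf : IntegrableOn f s μ) (c : X) :
    Tendsto (fun δ => ∫ x in s \ Metric.ball c δ, f x ∂μ) (𝓝[>] 0) (𝓝 (∫ x in s, f x ∂μ)) := by
  simp_rw [sdiff_eq, ← setIntegral_indicator measurableSet_ball.compl]
  refine tendsto_integral_filter_of_dominated_convergence (fun x => ‖f x‖)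
    (Eventually.of_forall fun _ => hf.aestronglyMeasurable.indicator measurableSet_ball.compl)
    (Eventually.of_forall fun _ => ae_of_all _ fun x => norm_indicator_le_norm_self f x) hf.norm ?_
  filter_upwards [ae_restrict_of_ae (Measure.ae_ne μ c)] with x hx
  refine tendsto_const_nhds.congr' ?_
  filter_upwards [Ioo_mem_nhdsGT (dist_pos.2 hx)] with δ hδ
  exact (indicator_of_mem (by simpa using hδ.2.le) f).symm

lemma integrableOn_Icc_inv_sub {x y c : ℝ} (hc : c < x ∨ y < c) :
    IntegrableOn (fun t => (t - c)⁻¹) (Icc x y) :=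
  ((continuousOn_id.sub continuousOn_const).inv₀ fun t ht => sub_ne_zero.2 fun h => by
    rcases hc with hc | hc <;> linarith [ht.1, ht.2, show t = c from h]).integrableOn_Icc

lemma setIntegral_Icc_inv_sub {x y c : ℝ} (hxy : x ≤ y) (hc : c < x ∨ y < c) :
    ∫ t in Icc x y, (t - c)⁻¹ = Real.log ((y - c) / (x - c)) := by
  rw [integral_Icc_eq_integral_Ioc, ← intervalIntegral.integral_of_le hxy,
    intervalIntegral.integral_comp_sub_right (fun t => t⁻¹), integral_inv]
  rw [uIcc_of_le (by linarith)]
  rintro ⟨h₁, h₂⟩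
  rcases hc with h | h <;> linarith

/-- `Real.log (a - c) = Real.log (c - a)` here, since `Real.log x = Real.log |x|`. -/
lemma setIntegral_Icc_diff_Ioo_inv_sub {a b c δ : ℝ} (hδ : 0 < δ) (ha : a ≤ c - δ)
    (hb : c + δ ≤ b) :
    ∫ t in Icc a b \ Ioo (c - δ) (c + δ), (t - c)⁻¹ = Real.log (b - c) - Real.log (a - c) := by
  have hsplit : Icc a b \ Ioo (c - δ) (c + δ) = Icc a (c - δ) ∪ Icc (c + δ) b := by
    ext t; simp only [Set.mem_sdiff, mem_Icc, mem_Ioo, mem_union]; grind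
  have hleft : c < a ∨ c - δ < c := Or.inr (by linarith)
  have hright : c < c + δ ∨ b < c := Or.inl (by linarith)
  rw [hsplit, setIntegral_union (disjoint_left.2 fun t h₁ h₂ => by linarith [h₁.2, h₂.1])
    measurableSet_Icc (integrableOn_Icc_inv_sub hleft) (integrableOn_Icc_inv_sub hright),
    setIntegral_Icc_inv_sub ha hleft, setIntegral_Icc_inv_sub hb hright,
    Real.log_div, Real.log_div, sub_sub_cancel_left, Real.log_neg_eq_log, add_sub_cancel_left]
  · ring
  all_goals intro h; linarith

lemma intervalIntegral_inv_ofReal_sub {a b : ℝ} {z : ℂ}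
    (hz : ∀ t ∈ uIcc a b, (t : ℂ) - z ∈ slitPlane) :
    ∫ t in a..b, ((t : ℂ) - z)⁻¹ = log (b - z) - log (a - z) := by
  refine intervalIntegral.integral_eq_sub_of_hasDerivAt (f := fun t : ℝ => log ((t : ℂ) - z))
    (fun t ht => ?_) (ContinuousOn.intervalIntegrable ?_)
  · simpa using ((hasDerivAt_id t).ofReal_comp.sub_const z).clog_real (hz t ht)
  · exact (by fun_prop : Continuous fun t : ℝ => (t : ℂ) - z).continuousOn.inv₀
      fun t ht => slitPlane_ne_zero (hz t ht)

lemma tendsto_log_ofReal_sub_I_mul_of_pos {x : ℝ} (hx : 0 < x) :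
    Tendsto (fun ε : ℝ => log (x - I * ε)) (𝓝 0) (𝓝 (Real.log x)) := by
  have h : Tendsto (fun ε : ℝ => (x : ℂ) - I * ε) (𝓝 0) (𝓝 x) := by
    simpa using ((by fun_prop : Continuous fun ε : ℝ => (x : ℂ) - I * ε).tendsto 0)
  simpa [ofReal_log hx.le] using h.clog (ofReal_mem_slitPlane.2 hx)

lemma tendsto_log_ofReal_sub_I_mul_of_neg {x : ℝ} (hx : x < 0) :
    Tendsto (fun ε : ℝ => log (x - I * ε)) (𝓝[>] 0) (𝓝 (Real.log x - Real.pi * I)) := by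
  have h : Tendsto (fun ε : ℝ => (x : ℂ) - I * ε) (𝓝[>] 0) (𝓝[{z | z.im < 0}] x) := by
    refine tendsto_nhdsWithin_iff.2 ⟨?_, ?_⟩
    · simpa using ((by fun_prop : Continuous fun ε : ℝ => (x : ℂ) - I * ε).tendsto 0).mono_left
        nhdsWithin_le_nhds
    · filter_upwards [self_mem_nhdsWithin] with ε hε
      simpa using hε
  simpa [Function.comp_def, Real.log_abs] using
    (tendsto_log_nhdsWithin_im_neg_of_re_neg_of_im_zero (by simpa using hx) (ofReal_im x)).comp h

section HolderAtPoint

variable {a b lam α M : ℝ} {ψ : ℝ → ℂ}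

lemma aestronglyMeasurable_sub_div (hψ : AEStronglyMeasurable ψ (volume.restrict (Icc a b)))
    {w : ℝ → ℂ} (hw : Measurable w) :
    AEStronglyMeasurable (fun t => (ψ t - ψ lam) / w t) (volume.restrict (Icc a b)) := by
  simp_rw [div_eq_mul_inv]
  exact (hψ.sub aestronglyMeasurable_const).mul hw.inv.aestronglyMeasurable

lemma abs_sub_le_norm_ofReal_sub_sub_I_mul (t lam ε : ℝ) :
    |t - lam| ≤ ‖(t : ℂ) - lam - I * ε‖ := by
  simpa using abs_re_le_norm ((t : ℂ) - lam - I * ε)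

lemma integrableOn_sub_div (hα : 0 < α) (hM : 0 ≤ M)
    (hψ : AEStronglyMeasurable ψ (volume.restrict (Icc a b)))
    (hψlam : ∀ t ∈ Icc a b, ‖ψ t - ψ lam‖ ≤ M * |t - lam| ^ α) {w : ℝ → ℂ} (hw : Measurable w)
    (hlw : ∀ t, |t - lam| ≤ ‖w t‖) :
    IntegrableOn (fun t => (ψ t - ψ lam) / w t) (Icc a b) := by
  refine Integrable.mono'
    ((integrableOn_Icc_abs_sub_rpow (s := α - 1) (by linarith) a b lam).const_mul M)
    (aestronglyMeasurable_sub_div hψ hw) ?_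
  filter_upwards [ae_restrict_mem measurableSet_Icc] with t ht
  exact norm_div_le_mul_rpow_sub_one hα hM (abs_nonneg _) (hlw t) (hψlam t ht)

lemma tendsto_integral_sub_div_sub_I_mul (hα : 0 < α) (hM : 0 ≤ M)
    (hψ : AEStronglyMeasurable ψ (volume.restrict (Icc a b)))
    (hψlam : ∀ t ∈ Icc a b, ‖ψ t - ψ lam‖ ≤ M * |t - lam| ^ α) :
    Tendsto (fun ε : ℝ => ∫ t in Icc a b, (ψ t - ψ lam) / ((t : ℂ) - lam - I * ε)) (𝓝 0)
      (𝓝 (∫ t in Icc a b, (ψ t - ψ lam) / ((t : ℂ) - lam))) := by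
  refine tendsto_integral_filter_of_dominated_convergence (fun t => M * |t - lam| ^ (α - 1))
    (Eventually.of_forall fun ε => aestronglyMeasurable_sub_div hψ (by fun_prop))
    (Eventually.of_forall fun ε => ?_)
    ((integrableOn_Icc_abs_sub_rpow (s := α - 1) (by linarith) a b lam).const_mul M) ?_
  · filter_upwards [ae_restrict_mem measurableSet_Icc] with t ht
    exact norm_div_le_mul_rpow_sub_one hα hM (abs_nonneg _)
      (abs_sub_le_norm_ofReal_sub_sub_I_mul t lam ε) (hψlam t ht)
  · filter_upwards [ae_restrict_of_ae (Measure.ae_ne volume lam)] with t ht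
    have hden : (t : ℂ) - lam ≠ 0 := by
      rw [← ofReal_sub]; exact ofReal_ne_zero.2 (sub_ne_zero.2 ht)
    refine tendsto_const_nhds.div ?_ hden
    simpa using ((by fun_prop : Continuous fun ε : ℝ => (t : ℂ) - lam - I * ε).tendsto 0)

lemma tendsto_setIntegral_diff_Ioo_div_sub (hα : 0 < α) (hM : 0 ≤ M)
    (hψ : AEStronglyMeasurable ψ (volume.restrict (Icc a b)))
    (hψlam : ∀ t ∈ Icc a b, ‖ψ t - ψ lam‖ ≤ M * |t - lam| ^ α) (hlam : lam ∈ Ioo a b) :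
    Tendsto (fun δ : ℝ => ∫ t in Icc a b \ Ioo (lam - δ) (lam + δ), ψ t / ((t : ℂ) - lam))
      (𝓝[>] 0) (𝓝 ((∫ t in Icc a b, (ψ t - ψ lam) / ((t : ℂ) - lam)) +
        ψ lam * (Real.log (b - lam) - Real.log (a - lam)))) := by
  have hg := integrableOn_sub_div hα hM hψ hψlam (w := fun t => (t : ℂ) - lam) (by fun_prop)
    fun t => by simpa using abs_sub_le_norm_ofReal_sub_sub_I_mul t lam 0
  have hsplit : ∀ δ ∈ Ioo 0 (min (lam - a) (b - lam)),
      ∫ t in Icc a b \ Ioo (lam - δ) (lam + δ), ψ t / ((t : ℂ) - lam) =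
        (∫ t in Icc a b \ Ioo (lam - δ) (lam + δ), (ψ t - ψ lam) / ((t : ℂ) - lam)) +
          ψ lam * (Real.log (b - lam) - Real.log (a - lam)) := by
    rintro δ ⟨hδ, hδlam⟩
    have hinv : IntegrableOn (fun t : ℝ => (t - lam)⁻¹) (Icc a b \ Ioo (lam - δ) (lam + δ)) := by
      refine ContinuousOn.integrableOn_compact (isCompact_Icc.diff isOpen_Ioo)
        ((continuous_sub_right lam).continuousOn.inv₀ fun t ht => sub_ne_zero.2 ?_)
      rintro rfl
      exact ht.2 ⟨by linarith, by linarith⟩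
    have hpt : ∀ t : ℝ, ψ t / ((t : ℂ) - lam) =
        (ψ t - ψ lam) / ((t : ℂ) - lam) + ψ lam * ((t - lam)⁻¹ : ℝ) := by
      intro t; push_cast; ring
    simp_rw [hpt]
    have hinvC : IntegrableOn (fun t : ℝ => ψ lam * ((t - lam)⁻¹ : ℝ))
        (Icc a b \ Ioo (lam - δ) (lam + δ)) := hinv.ofReal.const_mul _
    rw [integral_add (hg.mono_set sdiff_subset) hinvC, integral_const_mul,
      integral_complex_ofReal, setIntegral_Icc_diff_Ioo_inv_sub hδ
        (by linarith [min_le_left (lam - a) (b - lam)])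
        (by linarith [min_le_right (lam - a) (b - lam)])]
    push_cast; ring
  have hlim := tendsto_setIntegral_diff_ball hg lam
  simp_rw [Real.ball_eq_Ioo] at hlim
  refine (hlim.add_const _).congr' ?_
  filter_upwards [Ioo_mem_nhdsGT (lt_min (sub_pos.2 hlam.1) (sub_pos.2 hlam.2))] with δ hδ
  exact (hsplit δ hδ).symm

lemma tendsto_integral_div_sub_I_mul (hα : 0 < α) (hM : 0 ≤ M)
    (hψ : AEStronglyMeasurable ψ (volume.restrict (Icc a b)))
    (hψlam : ∀ t ∈ Icc a b, ‖ψ t - ψ lam‖ ≤ M * |t - lam| ^ α) (hlam : lam ∈ Ioo a b) :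
    Tendsto (fun ε : ℝ => ∫ t in Icc a b, ψ t / ((t : ℂ) - lam - I * ε)) (𝓝[>] 0)
      (𝓝 ((∫ t in Icc a b, (ψ t - ψ lam) / ((t : ℂ) - lam)) +
        ψ lam * (Real.log (b - lam) - (Real.log (a - lam) - Real.pi * I)))) := by
  have hsplit : ∀ ε : ℝ, 0 < ε → ∫ t in Icc a b, ψ t / ((t : ℂ) - lam - I * ε) =
      (∫ t in Icc a b, (ψ t - ψ lam) / ((t : ℂ) - lam - I * ε)) +
        ψ lam * (log ((b - lam : ℝ) - I * ε) - log ((a - lam : ℝ) - I * ε)) := by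
    intro ε hε
    have hslit : ∀ t : ℝ, (t : ℂ) - (lam + I * ε) ∈ slitPlane := fun t =>
      mem_slitPlane_iff.2 (Or.inr (by simpa using hε.ne'))
    have hcont : ContinuousOn (fun t : ℝ => ((t : ℂ) - lam - I * ε)⁻¹) (Icc a b) :=
      (by fun_prop : Continuous fun t : ℝ => (t : ℂ) - lam - I * ε).continuousOn.inv₀
        fun t _ => by simpa [sub_sub] using slitPlane_ne_zero (hslit t)
    have hlog : ∫ t in Icc a b, ((t : ℂ) - lam - I * ε)⁻¹ =
        log ((b - lam : ℝ) - I * ε) - log ((a - lam : ℝ) - I * ε) := by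
      rw [integral_Icc_eq_integral_Ioc,
        ← intervalIntegral.integral_of_le (hlam.1.trans hlam.2).le]
      simp_rw [sub_sub (_ : ℂ) (lam : ℂ)]
      rw [intervalIntegral_inv_ofReal_sub fun t _ => hslit t]
      push_cast; ring_nf
    have hpt : ∀ t : ℝ, ψ t / ((t : ℂ) - lam - I * ε) =
        (ψ t - ψ lam) / ((t : ℂ) - lam - I * ε) + ψ lam * ((t : ℂ) - lam - I * ε)⁻¹ := by
      intro t; ring
    simp_rw [hpt]
    rw [integral_add (integrableOn_sub_div hα hM hψ hψlam (by fun_prop)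
      fun t => abs_sub_le_norm_ofReal_sub_sub_I_mul t lam ε)
      (Integrable.const_mul hcont.integrableOn_Icc _), integral_const_mul, hlog]
  have hlim := ((tendsto_integral_sub_div_sub_I_mul hα hM hψ hψlam).mono_left
    nhdsWithin_le_nhds).add <| Tendsto.const_mul (ψ lam) <|
      ((tendsto_log_ofReal_sub_I_mul_of_pos (sub_pos.2 hlam.2)).mono_left nhdsWithin_le_nhds).sub
        (tendsto_log_ofReal_sub_I_mul_of_neg (sub_neg.2 hlam.1))
  refine hlim.congr' ?_
  filter_upwards [self_mem_nhdsWithin] with ε hε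
  exact (hsplit ε hε).symm

end HolderAtPoint

theorem plemelj_formula_general (a b α : ℝ) (hα : α ∈ Set.Ioc (0:ℝ) 1)
    (ψ : ℝ → ℂ) (M : ℝ) (hM : 0 ≤ M)
    (hHolder : ∀ t ∈ Set.Icc a b, ∀ t' ∈ Set.Icc a b,
      ‖ψ t - ψ t'‖ ≤ M * |t - t'| ^ α)
    (lam : ℝ) (hlam : lam ∈ Set.Ioo a b) :
    ∃ L : ℂ,
      Filter.Tendsto
        (fun δ : ℝ => ∫ t in Set.Icc a b \ Set.Ioo (lam - δ) (lam + δ),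
          ψ t / ((t : ℂ) - (lam : ℂ)))
        (nhdsWithin 0 (Set.Ioi 0)) (nhds L) ∧
      Filter.Tendsto
        (fun ε : ℝ => ∫ t in Set.Icc a b,
          ψ t / ((t : ℂ) - (lam : ℂ) - Complex.I * (ε : ℂ)))
        (nhdsWithin 0 (Set.Ioi 0))
        (nhds (L + (Real.pi : ℂ) * Complex.I * ψ lam)) := by
  have hψ : AEStronglyMeasurable ψ (volume.restrict (Icc a b)) :=
    (continuousOn_of_dist_le_mul_rpow hα.1 fun t ht t' ht' => by
      simpa [dist_eq_norm, Real.dist_eq] using hHolder t ht t' ht').aestronglyMeasurable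
        measurableSet_Icc
  have hψlam : ∀ t ∈ Icc a b, ‖ψ t - ψ lam‖ ≤ M * |t - lam| ^ α :=
    fun t ht => hHolder t ht lam (Ioo_subset_Icc_self hlam)
  refine ⟨_, tendsto_setIntegral_diff_Ioo_div_sub hα.1 hM hψ hψlam hlam, ?_⟩
  convert tendsto_integral_div_sub_I_mul hα.1 hM hψ hψlam hlam using 2
  ring

/-- Sokhotski–Plemelj formula:
`lim_{ε→0⁺} ∫_a^b ψ(t)/(t-λ-iε) dt = p.v.∫_a^b ψ(t)/(t-λ) dt + iπ ψ(λ)`. -/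
theorem plemelj_formula (a b α : ℝ) (hab : a < b) (hα : α ∈ Set.Ioc (0:ℝ) 1)
    (ψ : ℝ → ℂ) (M : ℝ) (hM : 0 ≤ M)
    (hHolder : ∀ t ∈ Set.Icc a b, ∀ t' ∈ Set.Icc a b,
      ‖ψ t - ψ t'‖ ≤ M * |t - t'| ^ α)
    (lam : ℝ) (hlam : lam ∈ Set.Ioo a b) :
    ∃ L : ℂ,
      Filter.Tendsto
        (fun δ : ℝ => ∫ t in Set.Icc a b \ Set.Ioo (lam - δ) (lam + δ),
          ψ t / ((t : ℂ) - (lam : ℂ)))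
        (nhdsWithin 0 (Set.Ioi 0)) (nhds L) ∧
      Filter.Tendsto
        (fun ε : ℝ => ∫ t in Set.Icc a b,
          ψ t / ((t : ℂ) - (lam : ℂ) - Complex.I * (ε : ℂ)))
        (nhdsWithin 0 (Set.Ioi 0))
        (nhds (L + (Real.pi : ℂ) * Complex.I * ψ lam)) :=
  plemelj_formula_general a b α hα ψ M hM hHolder lam hlam
end

section
/- Let a < b, let α ∈ (0,1), and let ψ : [a,b] → ℂ be α-Hölder continuous with ψ(a) = 0. Then the function t ↦ ψ(t)/(t−a) is Lebesgue integrable on (a,b), and there is a constant C = C(a,b,α) > 0, independent of ψ, such that for every λ ∈ (a, (a+b)/2] one has | ( p.v.∫_a^b ψ(t)/(t−λ) dt + iπψ(λ) ) − ∫_a^b ψ(t)/(t−a) dt | ≤ C ‖ψ‖_{C^{0,α}} |λ − a|^α. -/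
/-!
Let `K` be the least Hölder constant of `ψ`, `r = λ - a` and `m = λ + r ≤ b`. The difference
quotient `(ψ t - ψ λ)/(t - λ)` is dominated by `K |t - λ|^(α-1)`, so the principal value equals
`∫_a^b (ψ t - ψ λ)/(t - λ) dt + ψ(λ) log((b - λ)/(λ - a))`. On `[a, m]` both difference quotients
contribute `O(K r^α / α)`. On `[m, b]` the two kernels differ by `ψ t · r/((t - λ)(t - a))` minus
`ψ(λ)/(t - λ)`; the latter integrates to `ψ(λ) log((b - λ)/r)` and cancels the logarithm, while
`|ψ t| ≤ K (t - a)^α` and `t - λ ≥ (t - a)/2` bound the former by `O(K r^α / (1 - α))`. Finally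
`|π ψ(λ)| ≤ π K r^α` because `ψ(a) = 0`.
-/

open MeasureTheory Filter Set

/-- The sup norm of ψ over [a,b]. -/
noncomputable def supNormIcc (a b : ℝ) (ψ : ℝ → ℂ) : ℝ :=
  ⨆ t : Set.Icc a b, ‖ψ (t : ℝ)‖

/-- The least α-Hölder constant of ψ on [a,b]. -/
noncomputable def holderSeminorm (a b α : ℝ) (ψ : ℝ → ℂ) : ℝ :=
  sInf {M : ℝ | 0 ≤ M ∧ ∀ t ∈ Set.Icc a b, ∀ t' ∈ Set.Icc a b,
    ‖ψ t - ψ t'‖ ≤ M * |t - t'| ^ α}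

/-- The Hölder norm ‖ψ‖_{C^{0,α}([a,b])} = sup norm + least Hölder constant. -/
noncomputable def holderNorm (a b α : ℝ) (ψ : ℝ → ℂ) : ℝ :=
  supNormIcc a b ψ + holderSeminorm a b α ψ

open Topology

section HolderSeminorm

variable {a b α : ℝ} {ψ : ℝ → ℂ}

lemma holderSeminorm_nonneg : 0 ≤ holderSeminorm a b α ψ :=
  Real.sInf_nonneg fun _ hM => hM.1

lemma holderSeminorm_le_holderNorm : holderSeminorm a b α ψ ≤ holderNorm a b α ψ :=
  le_add_of_nonneg_left (Real.iSup_nonneg fun _ => norm_nonneg _)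

lemma norm_sub_le_holderSeminorm_mul
    (hψ : ∃ M : ℝ, 0 ≤ M ∧ ∀ t ∈ Icc a b, ∀ t' ∈ Icc a b, ‖ψ t - ψ t'‖ ≤ M * |t - t'| ^ α)
    {t t' : ℝ} (ht : t ∈ Icc a b) (ht' : t' ∈ Icc a b) :
    ‖ψ t - ψ t'‖ ≤ holderSeminorm a b α ψ * |t - t'| ^ α := by
  rcases eq_or_ne t t' with rfl | hne
  · simpa using mul_nonneg holderSeminorm_nonneg (Real.rpow_nonneg le_rfl α)
  have hpos : 0 < |t - t'| ^ α := Real.rpow_pos_of_pos (abs_pos.2 (sub_ne_zero.2 hne)) α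
  rw [← div_le_iff₀ hpos]
  obtain ⟨M, hM⟩ := hψ
  exact le_csInf ⟨M, hM⟩ fun M' hM' => (div_le_iff₀ hpos).2 (hM'.2 t ht t' ht')

end HolderSeminorm

section RealPowers

variable {p : ℝ}

lemma intervalIntegrable_abs_rpow (hp : -1 < p) (c : ℝ) :
    IntervalIntegrable (fun t => |t| ^ p) volume 0 c := by
  have key : ∀ c : ℝ, 0 ≤ c → IntervalIntegrable (fun t => |t| ^ p) volume 0 c := fun c hc =>
    (intervalIntegral.intervalIntegrable_rpow' hp).congr
      (fun t ht => by rw [uIoc_of_le hc] at ht; simp [abs_of_pos ht.1])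
  rcases le_total 0 c with hc | hc
  · exact key c hc
  · rw [IntervalIntegrable.iff_comp_neg]
    simpa using key (-c) (by linarith)

lemma intervalIntegrable_abs_sub_rpow (hp : -1 < p) (x c d : ℝ) :
    IntervalIntegrable (fun t => |t - x| ^ p) volume c d := by
  simpa using ((intervalIntegrable_abs_rpow hp (c - x)).symm.trans
    (intervalIntegrable_abs_rpow hp (d - x))).comp_sub_right x

lemma integral_abs_sub_rpow (hp : -1 < p) {c x d : ℝ} (hcx : c ≤ x) (hxd : x ≤ d) :
    ∫ t in c..d, |t - x| ^ p = ((x - c) ^ (p + 1) + (d - x) ^ (p + 1)) / (p + 1) := by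
  have hp1 : p + 1 ≠ 0 := by linarith
  have hleft : ∫ t in c..x, |t - x| ^ p = (x - c) ^ (p + 1) / (p + 1) := by
    rw [intervalIntegral.integral_congr (g := fun t => (x - t) ^ p) fun t ht => by
        rw [uIcc_of_le hcx] at ht; simp [abs_of_nonpos (sub_nonpos.2 ht.2)],
      intervalIntegral.integral_comp_sub_left (fun t => t ^ p), sub_self,
      integral_rpow (Or.inl hp), Real.zero_rpow hp1, sub_zero]
  have hright : ∫ t in x..d, |t - x| ^ p = (d - x) ^ (p + 1) / (p + 1) := by
    rw [intervalIntegral.integral_congr (g := fun t => (t - x) ^ p) fun t ht => by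
        rw [uIcc_of_le hxd] at ht; simp [abs_of_nonneg (sub_nonneg.2 ht.1)],
      intervalIntegral.integral_comp_sub_right (fun t => t ^ p), sub_self,
      integral_rpow (Or.inl hp), Real.zero_rpow hp1, sub_zero]
  rw [← intervalIntegral.integral_add_adjacent_intervals (b := x)
    (intervalIntegrable_abs_sub_rpow hp x c x) (intervalIntegrable_abs_sub_rpow hp x x d),
    hleft, hright, add_div]

lemma integral_sub_rpow_le_of_lt_neg_one {q : ℝ} (hq : q < -1) {a m b : ℝ} (ham : a < m)
    (hmb : m ≤ b) : ∫ t in m..b, (t - a) ^ q ≤ (m - a) ^ (q + 1) / -(q + 1) := by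
  have h0 : (0 : ℝ) ∉ uIcc (m - a) (b - a) := by
    rw [uIcc_of_le (by linarith)]; exact fun h => by linarith [h.1]
  rw [intervalIntegral.integral_comp_sub_right (fun t => t ^ q),
    integral_rpow (Or.inr ⟨hq.ne, h0⟩), div_le_iff_of_neg (by linarith), div_neg, neg_mul,
    div_mul_cancel₀ _ (by linarith)]
  linarith [Real.rpow_nonneg (by linarith : 0 ≤ b - a) (q + 1)]

lemma two_mul_rpow_le {r α : ℝ} (hr : 0 ≤ r) (hα : α ≤ 1) :
    (2 * r) ^ α ≤ 2 * r ^ α := by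
  rw [Real.mul_rpow zero_le_two hr]
  gcongr
  exact (Real.rpow_le_rpow_of_exponent_le one_le_two hα).trans_eq (Real.rpow_one 2)

end RealPowers

lemma norm_div_ofReal_sub_le {z : ℂ} {K α t x : ℝ} (hK : 0 ≤ K)
    (hz : ‖z‖ ≤ K * |t - x| ^ α) : ‖z / ((t : ℂ) - x)‖ ≤ K * |t - x| ^ (α - 1) := by
  rcases eq_or_ne t x with rfl | htx
  · simpa using mul_nonneg hK (Real.rpow_nonneg le_rfl _)
  have hpos : 0 < |t - x| := abs_pos.2 (sub_ne_zero.2 htx)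
  rw [norm_div, ← Complex.ofReal_sub, Complex.norm_real, Real.norm_eq_abs,
    Real.rpow_sub_one hpos.ne', mul_div_assoc', le_div_iff₀ hpos]
  exact (div_mul_cancel₀ _ hpos.ne').symm ▸ hz

lemma continuousOn_of_norm_sub_le_rpow {E : Type*} [NormedAddCommGroup E] {s : Set ℝ}
    {f : ℝ → E} {K α : ℝ} (hα : 0 < α)
    (hf : ∀ t ∈ s, ∀ t' ∈ s, ‖f t - f t'‖ ≤ K * |t - t'| ^ α) : ContinuousOn f s := by
  intro x hx
  have hbound : Tendsto (fun t => K * |t - x| ^ α) (𝓝[s] x) (𝓝 0) := by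
    have : Continuous fun t : ℝ => K * |t - x| ^ α := by fun_prop (disch := positivity)
    simpa [Real.zero_rpow hα.ne'] using (this.continuousWithinAt (s := s) (x := x)).tendsto
  exact tendsto_iff_norm_sub_tendsto_zero.2 <| squeeze_zero' (.of_forall fun _ => norm_nonneg _)
    (eventually_nhdsWithin_of_forall fun t ht => hf t ht x hx) hbound

lemma integrableOn_div_sub_of_norm_sub_le_rpow {a b K α c : ℝ} {ψ : ℝ → ℂ} (hα : 0 < α)
    (hK : 0 ≤ K) (hψ : ∀ t ∈ Icc a b, ∀ t' ∈ Icc a b, ‖ψ t - ψ t'‖ ≤ K * |t - t'| ^ α)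
    (hc : c ∈ Icc a b) : IntegrableOn (fun t => (ψ t - ψ c) / ((t : ℂ) - c)) (Icc a b) := by
  have hmeas : AEStronglyMeasurable (fun t => (ψ t - ψ c) / ((t : ℂ) - c))
      (volume.restrict (Icc a b)) := by
    simp only [div_eq_mul_inv]
    exact (((continuousOn_of_norm_sub_le_rpow hα hψ).sub continuousOn_const).aestronglyMeasurable
      measurableSet_Icc).mul (by fun_prop)
  refine Integrable.mono' ?_ hmeas (ae_restrict_of_forall_mem measurableSet_Icc fun t ht =>
    norm_div_ofReal_sub_le hK (hψ t ht c hc))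
  exact (intervalIntegrable_iff_integrableOn_Icc_of_le (hc.1.trans hc.2)).1
    ((intervalIntegrable_abs_sub_rpow (by linarith) c a b).const_mul K)

lemma integral_inv_ofReal_sub {x c d : ℝ} (hx : x ∉ uIcc c d) :
    ∫ t in c..d, ((t : ℂ) - x)⁻¹ = Real.log ((d - x) / (c - x)) := by
  have h0 : (0 : ℝ) ∉ uIcc (c - x) (d - x) := fun h => hx <| by simpa [mem_uIcc] using h
  have hcast : ∀ t : ℝ, ((t : ℂ) - x)⁻¹ = (((t - x)⁻¹ : ℝ) : ℂ) := fun t => by push_cast; rfl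
  simp only [hcast]
  rw [intervalIntegral.integral_ofReal, intervalIntegral.integral_comp_sub_right (fun t => t⁻¹),
    integral_inv h0]

lemma tendsto_setIntegral_diff_Ioo {E : Type*} [NormedAddCommGroup E] [NormedSpace ℝ E]
    {s : Set ℝ} {g : ℝ → E} (hg : IntegrableOn g s) (x : ℝ) :
    Tendsto (fun δ => ∫ t in s \ Ioo (x - δ) (x + δ), g t) (𝓝[>] 0) (𝓝 (∫ t in s, g t)) := by
  have hvol : Tendsto (fun δ => volume.restrict s (Ioo (x - δ) (x + δ))) (𝓝[>] 0) (𝓝 0) := by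
    have : Tendsto (fun δ : ℝ => ENNReal.ofReal (x + δ - (x - δ))) (𝓝[>] 0) (𝓝 0) := by
      simpa using (ENNReal.tendsto_ofReal
        ((by fun_prop : Continuous fun δ : ℝ => x + δ - (x - δ)).tendsto 0)).mono_left
          nhdsWithin_le_nhds
    refine tendsto_of_tendsto_of_tendsto_of_le_of_le tendsto_const_nhds this (fun _ => zero_le)
      fun δ => (Measure.restrict_apply_le _ _).trans_eq Real.volume_Ioo
  have hsmall := hg.tendsto_setIntegral_nhds_zero hvol
  simp only [Measure.restrict_restrict measurableSet_Ioo] at hsmall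
  have hsplit : ∀ δ, ∫ t in s \ Ioo (x - δ) (x + δ), g t
      = (∫ t in s, g t) - ∫ t in Ioo (x - δ) (x + δ) ∩ s, g t := fun δ => by
    rw [inter_comm, ← integral_inter_add_sdiff measurableSet_Ioo hg]; abel
  simpa [hsplit] using tendsto_const_nhds.sub hsmall

lemma continuousOn_inv_ofReal_sub {s : Set ℝ} {x : ℝ} (hx : x ∉ s) :
    ContinuousOn (fun t : ℝ => ((t : ℂ) - x)⁻¹) s :=
  (Continuous.continuousOn (by fun_prop)).inv₀ fun t ht h => hx <| by
    rwa [← Complex.ofReal_inj.1 (sub_eq_zero.1 h)]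

lemma setIntegral_inv_ofReal_sub_Icc_diff_Ioo {a b x δ : ℝ} (hδ : 0 < δ) (ha : a ≤ x - δ)
    (hb : x + δ ≤ b) :
    ∫ t in Icc a b \ Ioo (x - δ) (x + δ), ((t : ℂ) - x)⁻¹ = Real.log ((b - x) / (x - a)) := by
  have hset : Icc a b \ Ioo (x - δ) (x + δ) = Icc a (x - δ) ∪ Icc (x + δ) b := by
    ext t; simp only [Set.mem_sdiff, mem_Icc, mem_Ioo, mem_union]; grind
  have hint : ∀ {c d : ℝ}, x ∉ Icc c d → IntegrableOn (fun t : ℝ => ((t : ℂ) - x)⁻¹) (Icc c d) :=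
    fun hx => (continuousOn_inv_ofReal_sub hx).integrableOn_Icc
  have hdisj : Disjoint (Icc a (x - δ)) (Icc (x + δ) b) :=
    disjoint_left.2 fun t h1 h2 => by linarith [h1.2, h2.1]
  rw [hset, setIntegral_union hdisj measurableSet_Icc (hint fun h => by linarith [h.2])
      (hint fun h => by linarith [h.1]), integral_Icc_eq_integral_Ioc,
    integral_Icc_eq_integral_Ioc, ← intervalIntegral.integral_of_le ha,
    ← intervalIntegral.integral_of_le hb,
    integral_inv_ofReal_sub (by rw [uIcc_of_le ha]; exact fun h => by linarith [h.2]),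
    integral_inv_ofReal_sub (by rw [uIcc_of_le hb]; exact fun h => by linarith [h.1]),
    ← Complex.ofReal_add, show x - δ - x = -δ by ring, show a - x = -(x - a) by ring,
    neg_div_neg_eq, show x + δ - x = δ by ring,
    ← Real.log_mul (div_pos hδ (by linarith)).ne' (div_pos (by linarith) hδ).ne', mul_comm,
    div_mul_div_cancel₀ hδ.ne']

lemma tendsto_setIntegral_div_ofReal_sub_Icc_diff_Ioo {a b x : ℝ} {ψ : ℝ → ℂ} (hx : x ∈ Ioo a b)
    (hint : IntegrableOn (fun t => (ψ t - ψ x) / ((t : ℂ) - x)) (Icc a b)) :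
    Tendsto (fun δ => ∫ t in Icc a b \ Ioo (x - δ) (x + δ), ψ t / ((t : ℂ) - x)) (𝓝[>] 0)
      (𝓝 ((∫ t in a..b, (ψ t - ψ x) / ((t : ℂ) - x)) + ψ x * Real.log ((b - x) / (x - a)))) := by
  have hsplit : ∀ᶠ δ in 𝓝[>] (0 : ℝ),
      (∫ t in Icc a b \ Ioo (x - δ) (x + δ), (ψ t - ψ x) / ((t : ℂ) - x))
        + ψ x * Real.log ((b - x) / (x - a))
      = ∫ t in Icc a b \ Ioo (x - δ) (x + δ), ψ t / ((t : ℂ) - x) := by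
    filter_upwards [Ioo_mem_nhdsGT (lt_min (sub_pos.2 hx.1) (sub_pos.2 hx.2))] with δ hδ
    have hδx := lt_min_iff.1 hδ.2
    have hinv : IntegrableOn (fun t : ℝ => ψ x * ((t : ℂ) - x)⁻¹)
        (Icc a b \ Ioo (x - δ) (x + δ)) := by
      refine ContinuousOn.integrableOn_compact (isCompact_Icc.diff isOpen_Ioo) <|
        continuousOn_const.mul <| continuousOn_inv_ofReal_sub fun hx' => ?_
      exact hx'.2 ⟨by linarith [hδ.1], by linarith [hδ.1]⟩
    rw [← setIntegral_inv_ofReal_sub_Icc_diff_Ioo hδ.1 (by linarith) (by linarith),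
      ← integral_const_mul, ← integral_add (hint.mono_set sdiff_subset) hinv]
    congr with t
    ring
  rw [intervalIntegral.integral_of_le (hx.1.trans hx.2).le, ← integral_Icc_eq_integral_Ioc]
  exact ((tendsto_setIntegral_diff_Ioo hint x).add_const _).congr' hsplit

lemma norm_intervalIntegral_div_ofReal_sub_le {f : ℝ → ℂ} {K α c x d : ℝ} (hK : 0 ≤ K)
    (hα : 0 < α) (hcx : c ≤ x) (hxd : x ≤ d) (hf : ∀ t ∈ Icc c d, ‖f t‖ ≤ K * |t - x| ^ α) :
    ‖∫ t in c..d, f t / ((t : ℂ) - x)‖ ≤ K * ((x - c) ^ α + (d - x) ^ α) / α := by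
  have hp : -1 < α - 1 := by linarith
  calc ‖∫ t in c..d, f t / ((t : ℂ) - x)‖ ≤ ∫ t in c..d, K * |t - x| ^ (α - 1) :=
        intervalIntegral.norm_integral_le_of_norm_le (hcx.trans hxd)
          (ae_of_all _ fun t ht => norm_div_ofReal_sub_le hK (hf t (Ioc_subset_Icc_self ht)))
          ((intervalIntegrable_abs_sub_rpow hp x c d).const_mul K)
    _ = K * ((x - c) ^ α + (d - x) ^ α) / α := by
        rw [intervalIntegral.integral_const_mul, integral_abs_sub_rpow hp hcx hxd, sub_add_cancel,
          mul_div_assoc]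

lemma norm_intervalIntegral_mul_div_ofReal_sub_mul_le {f : ℝ → ℂ} {K α a x b : ℝ} (hK : 0 ≤ K)
    (hα : α < 1) (hax : a < x) (hb : 2 * x - a ≤ b)
    (hf : ∀ t ∈ Icc (2 * x - a) b, ‖f t‖ ≤ K * (t - a) ^ α) :
    ‖∫ t in (2 * x - a)..b, f t * ((x - a : ℝ) : ℂ) / (((t : ℂ) - x) * ((t : ℂ) - a))‖
      ≤ K * (2 * (x - a)) ^ α / (1 - α) := by
  have hbound : ∀ t ∈ Icc (2 * x - a) b,
      ‖f t * ((x - a : ℝ) : ℂ) / (((t : ℂ) - x) * ((t : ℂ) - a))‖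
        ≤ 2 * K * (x - a) * (t - a) ^ (α - 2) := by
    intro t ht
    have hta : 0 < t - a := by linarith [ht.1]
    have htx : (t - a) / 2 ≤ t - x := by linarith [ht.1]
    rw [norm_div, norm_mul, norm_mul, ← Complex.ofReal_sub, ← Complex.ofReal_sub,
      Complex.norm_real, Complex.norm_real, Complex.norm_real, Real.norm_of_nonneg (by linarith),
      Real.norm_of_nonneg (by linarith), Real.norm_of_nonneg (by linarith)]
    calc ‖f t‖ * (x - a) / ((t - x) * (t - a))
        ≤ K * (t - a) ^ α * (x - a) / ((t - a) / 2 * (t - a)) := by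
          gcongr
          exact hf t ht
      _ = 2 * K * (x - a) * (t - a) ^ (α - 2) := by
          rw [Real.rpow_sub hta, Real.rpow_two]; field_simp
  have hcont : ContinuousOn (fun t => 2 * K * (x - a) * (t - a) ^ (α - 2)) (uIcc (2 * x - a) b) :=
    continuousOn_const.mul <| (continuous_sub_right a).continuousOn.rpow_const fun t ht =>
      Or.inl (sub_pos.2 (by rw [uIcc_of_le hb] at ht; linarith [ht.1])).ne'
  calc _ ≤ ∫ t in (2 * x - a)..b, 2 * K * (x - a) * (t - a) ^ (α - 2) :=
        intervalIntegral.norm_integral_le_of_norm_le hb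
          (ae_of_all _ fun t ht => hbound t (Ioc_subset_Icc_self ht)) hcont.intervalIntegrable
    _ ≤ 2 * K * (x - a) * ((2 * x - a - a) ^ (α - 2 + 1) / -(α - 2 + 1)) := by
        rw [intervalIntegral.integral_const_mul]
        gcongr
        exact integral_sub_rpow_le_of_lt_neg_one (by linarith) (by linarith) hb
    _ = K * (2 * (x - a)) ^ α / (1 - α) := by
        have hxa : x - a ≠ 0 := (sub_pos.2 hax).ne'
        rw [show 2 * x - a - a = 2 * (x - a) by ring, show α - 2 + 1 = α - 1 by ring, neg_sub,
          Real.rpow_sub_one (by simpa using hxa)]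
        field_simp

lemma intervalIntegral_mul_div_ofReal_sub_mul_eq {ψ : ℝ → ℂ} {a x m b : ℝ} (hax : a < x)
    (hxm : x < m) (hmb : m ≤ b)
    (h1 : IntervalIntegrable (fun t => (ψ t - ψ x) / ((t : ℂ) - x)) volume m b)
    (h2 : IntervalIntegrable (fun t => ψ t / ((t : ℂ) - a)) volume m b) :
    ∫ t in m..b, ψ t * ((x - a : ℝ) : ℂ) / (((t : ℂ) - x) * ((t : ℂ) - a))
      = (∫ t in m..b, (ψ t - ψ x) / ((t : ℂ) - x)) - (∫ t in m..b, ψ t / ((t : ℂ) - a))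
        + ψ x * Real.log ((b - x) / (m - x)) := by
  have hx : x ∉ uIcc m b := by rw [uIcc_of_le hmb]; exact fun h => by linarith [h.1]
  have hinv : IntervalIntegrable (fun t : ℝ => ψ x * ((t : ℂ) - x)⁻¹) volume m b :=
    (continuousOn_const.mul (continuousOn_inv_ofReal_sub hx)).intervalIntegrable
  rw [← integral_inv_ofReal_sub hx, ← intervalIntegral.integral_const_mul,
    ← intervalIntegral.integral_sub h1 h2, ← intervalIntegral.integral_add (h1.sub h2) hinv]
  refine intervalIntegral.integral_congr fun t ht => ?_
  rw [uIcc_of_le hmb] at ht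
  have htx : (t : ℂ) - x ≠ 0 := sub_ne_zero.2 (Complex.ofReal_injective.ne (by linarith [ht.1]))
  have hta : (t : ℂ) - a ≠ 0 := sub_ne_zero.2 (Complex.ofReal_injective.ne (by linarith [ht.1]))
  push_cast
  field_simp
  ring

lemma pv_sub_endpoint_eq {ψ : ℝ → ℂ} {a b x : ℝ} (hax : a < x) (hmb : 2 * x - a ≤ b)
    (hint_x : IntegrableOn (fun t => (ψ t - ψ x) / ((t : ℂ) - x)) (Icc a b))
    (hint_a : IntegrableOn (fun t => ψ t / ((t : ℂ) - a)) (Icc a b)) :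
    (∫ t in a..b, (ψ t - ψ x) / ((t : ℂ) - x)) + ψ x * Real.log ((b - x) / (x - a))
        - ∫ t in a..b, ψ t / ((t : ℂ) - a)
      = (∫ t in a..2 * x - a, (ψ t - ψ x) / ((t : ℂ) - x))
        - (∫ t in a..2 * x - a, ψ t / ((t : ℂ) - a))
        + ∫ t in (2 * x - a)..b, ψ t * ((x - a : ℝ) : ℂ) / (((t : ℂ) - x) * ((t : ℂ) - a)) := by
  have haI : a ∈ Icc a b := left_mem_Icc.2 (by linarith)
  have hmI : 2 * x - a ∈ Icc a b := ⟨by linarith, hmb⟩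
  have hpieces : ∀ {f : ℝ → ℂ}, IntegrableOn f (Icc a b) →
      IntervalIntegrable f volume a (2 * x - a) ∧ IntervalIntegrable f volume (2 * x - a) b :=
    fun hf => ⟨(hf.mono_set (uIcc_subset_Icc haI hmI)).intervalIntegrable,
      (hf.mono_set (uIcc_subset_Icc hmI (right_mem_Icc.2 (by linarith)))).intervalIntegrable⟩
  have hfar := intervalIntegral_mul_div_ofReal_sub_mul_eq hax (by linarith) hmb
    (hpieces hint_x).2 (hpieces hint_a).2
  rw [show 2 * x - a - x = x - a by ring] at hfar
  rw [← intervalIntegral.integral_add_adjacent_intervals (hpieces hint_x).1 (hpieces hint_x).2,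
    ← intervalIntegral.integral_add_adjacent_intervals (hpieces hint_a).1 (hpieces hint_a).2, hfar]
  ring

lemma norm_rplus_sub_endpoint_le {a b α K x : ℝ} {ψ : ℝ → ℂ} (hα : α ∈ Ioo 0 1) (hK : 0 ≤ K)
    (hψ : ∀ t ∈ Icc a b, ∀ t' ∈ Icc a b, ‖ψ t - ψ t'‖ ≤ K * |t - t'| ^ α) (hψa : ψ a = 0)
    (hx : x ∈ Ioc a ((a + b) / 2)) :
    ‖(∫ t in a..b, (ψ t - ψ x) / ((t : ℂ) - x)) + ψ x * Real.log ((b - x) / (x - a))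
        + Real.pi * Complex.I * ψ x - ∫ t in a..b, ψ t / ((t : ℂ) - a)‖
      ≤ (4 / α + 2 / (1 - α) + Real.pi) * K * (x - a) ^ α := by
  obtain ⟨hα0, hα1⟩ := hα
  obtain ⟨hax, hxb⟩ := hx
  have hmb : 2 * x - a ≤ b := by linarith
  have haI : a ∈ Icc a b := left_mem_Icc.2 (by linarith)
  have hxI : x ∈ Icc a b := ⟨hax.le, by linarith⟩
  have hψ_le : ∀ t ∈ Icc a b, ‖ψ t‖ ≤ K * |t - a| ^ α := fun t ht => by
    simpa [hψa] using hψ t ht a haI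
  have hK2 : K * (2 * (x - a)) ^ α ≤ 2 * K * (x - a) ^ α := by
    linarith [mul_le_mul_of_nonneg_left (two_mul_rpow_le (sub_pos.2 hax).le hα1.le) hK]
  have hP : ‖Real.pi * Complex.I * ψ x‖ ≤ Real.pi * (K * (x - a) ^ α) := by
    simpa [abs_of_pos Real.pi_pos, abs_of_pos (sub_pos.2 hax)] using
      mul_le_mul_of_nonneg_left (hψ_le x hxI) Real.pi_pos.le
  rw [add_sub_right_comm, pv_sub_endpoint_eq hax hmb
    (integrableOn_div_sub_of_norm_sub_le_rpow hα0 hK hψ hxI)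
    (by simpa [hψa] using integrableOn_div_sub_of_norm_sub_le_rpow hα0 hK hψ haI)]
  set A := ∫ t in a..2 * x - a, (ψ t - ψ x) / ((t : ℂ) - x)
  set B := ∫ t in a..2 * x - a, ψ t / ((t : ℂ) - a)
  set F := ∫ t in (2 * x - a)..b, ψ t * ((x - a : ℝ) : ℂ) / (((t : ℂ) - x) * ((t : ℂ) - a))
  set P := Real.pi * Complex.I * ψ x
  have hA : ‖A‖ ≤ 2 * K * (x - a) ^ α / α :=
    (norm_intervalIntegral_div_ofReal_sub_le hK hα0 hax.le (by linarith) fun t ht =>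
      hψ t (Icc_subset_Icc le_rfl hmb ht) x hxI).trans_eq (by ring_nf)
  have hB : ‖B‖ ≤ 2 * K * (x - a) ^ α / α := by
    refine (norm_intervalIntegral_div_ofReal_sub_le hK hα0 le_rfl (by linarith) fun t ht =>
      hψ_le t (Icc_subset_Icc le_rfl hmb ht)).trans ?_
    rw [sub_self, Real.zero_rpow hα0.ne', zero_add, show 2 * x - a - a = 2 * (x - a) by ring]
    gcongr
  have hF : ‖F‖ ≤ 2 * K * (x - a) ^ α / (1 - α) := by
    refine (norm_intervalIntegral_mul_div_ofReal_sub_mul_le hK hα1 hax hmb fun t ht => ?_).trans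
      (by gcongr)
    simpa [abs_of_nonneg (by linarith [ht.1] : 0 ≤ t - a)] using
      hψ_le t ⟨by linarith [ht.1], ht.2⟩
  calc ‖A - B + F + P‖ ≤ ‖A‖ + ‖B‖ + ‖F‖ + ‖P‖ := by
        linarith [norm_sub_le A B, norm_add_le (A - B) F, norm_add_le (A - B + F) P]
    _ ≤ 2 * K * (x - a) ^ α / α + 2 * K * (x - a) ^ α / α + 2 * K * (x - a) ^ α / (1 - α)
        + Real.pi * (K * (x - a) ^ α) := by gcongr
    _ = (4 / α + 2 / (1 - α) + Real.pi) * K * (x - a) ^ α := by ring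

/-- if ψ is α-Hölder on [a,b] with ψ(a)=0, then t ↦ ψ(t)/(t-a) is integrable
on (a,b) and `r⁺(λ) = p.v.∫_a^b ψ(t)/(t-λ) dt + iπψ(λ)` is α-Hölder up to the endpoint a,
with value `∫_a^b ψ(t)/(t-a) dt` there, the constant being independent of ψ. -/
theorem rplus_holder_endpoint (a b α : ℝ) (hab : a < b) (hα : α ∈ Set.Ioo (0:ℝ) 1) :
    ∃ C > 0, ∀ ψ : ℝ → ℂ,
      (∃ M : ℝ, 0 ≤ M ∧ ∀ t ∈ Set.Icc a b, ∀ t' ∈ Set.Icc a b,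
        ‖ψ t - ψ t'‖ ≤ M * |t - t'| ^ α) →
      ψ a = 0 →
      MeasureTheory.IntegrableOn (fun t : ℝ => ψ t / ((t : ℂ) - (a : ℂ)))
        (Set.Ioo a b) ∧
      ∀ lam ∈ Set.Ioc a ((a + b) / 2), ∀ R : ℂ,
        Filter.Tendsto
          (fun δ : ℝ => ∫ t in Set.Icc a b \ Set.Ioo (lam - δ) (lam + δ),
            ψ t / ((t : ℂ) - (lam : ℂ)))
          (nhdsWithin 0 (Set.Ioi 0)) (nhds R) →
        ‖(R + (Real.pi : ℂ) * Complex.I * ψ lam)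
            - ∫ t in Set.Ioo a b, ψ t / ((t : ℂ) - (a : ℂ))‖
          ≤ C * holderNorm a b α ψ * |lam - a| ^ α := by
  have hC : 0 < 4 / α + 2 / (1 - α) + Real.pi := by
    have := hα.1; have := sub_pos.2 hα.2; positivity
  refine ⟨_, hC, fun ψ hψ hψa => ?_⟩
  have hK : ∀ t ∈ Icc a b, ∀ t' ∈ Icc a b,
      ‖ψ t - ψ t'‖ ≤ holderSeminorm a b α ψ * |t - t'| ^ α :=
    fun t ht t' ht' => norm_sub_le_holderSeminorm_mul hψ ht ht'
  have hint := fun {c} (hc : c ∈ Icc a b) =>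
    integrableOn_div_sub_of_norm_sub_le_rpow hα.1 holderSeminorm_nonneg hK hc
  refine ⟨by simpa [hψa] using (hint (left_mem_Icc.2 hab.le)).mono_set Ioo_subset_Icc_self,
    fun lam hlam R hR => ?_⟩
  have hlamI : lam ∈ Ioo a b := ⟨hlam.1, by linarith [hlam.2]⟩
  rw [tendsto_nhds_unique hR (tendsto_setIntegral_div_ofReal_sub_Icc_diff_Ioo hlamI
      (hint (Ioo_subset_Icc_self hlamI))),
    ← integral_Ioc_eq_integral_Ioo, ← intervalIntegral.integral_of_le hab.le,
    abs_of_pos (sub_pos.2 hlam.1)]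
  refine (norm_rplus_sub_endpoint_le hα holderSeminorm_nonneg hK hψa hlam).trans ?_
  have := Real.rpow_nonneg (sub_pos.2 hlam.1).le α
  gcongr
  exact holderSeminorm_le_holderNorm
end
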